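/- Let n ≥ 4, R > 0 and Ω = B_R ⊂ ℝⁿ, and let ω_n denote the surface area of the unit sphere in ℝⁿ. If u ∈ C⁰(Ω̄) and w ∈ C²(Ω̄) are nonnegative radially symmetric functions satisfying −Δw + w = u in Ω, ∂_ν w = 0 on ∂Ω, and ∫_Ω u dx = m, then the radial derivative of w satisfies |∇w(x)| ≤ 2m / (ω_n |x|^{n−1}) for all x with 0 < |x| ≤ R. -/

import Mathlib

open MeasureTheory Metric Set Filter

noncomputable section

abbrev En (n : ℕ) := EuclideanSpace ℝ (Fin n)

/-- partial derivative of `f` in the `i`-th coordinate direction -/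
def pd {n : ℕ} (f : En n → ℝ) (i : Fin n) (x : En n) : ℝ :=
  fderiv ℝ f x (EuclideanSpace.single i 1)

/-- Laplacian of `f` -/
def lap {n : ℕ} (f : En n → ℝ) (x : En n) : ℝ :=
  ∑ i, pd (pd f i) i x

/-- `f` is radially symmetric on the closed ball of radius `R` -/
def radial {n : ℕ} (R : ℝ) (f : En n → ℝ) : Prop :=
  ∀ x ∈ closedBall (0 : En n) R, ∀ y ∈ closedBall (0 : En n) R, ‖x‖ = ‖y‖ → f x = f y

/-- surface area of the unit sphere in `ℝⁿ`, `ω_n = n·|B₁|` -/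
def sphereArea (n : ℕ) : ℝ := n * (volume (ball (0 : En n) 1)).toReal

/-!
Write `w x = f ‖x‖` and `u x = g ‖x‖`. In polar coordinates the equation reads
`(r^(n-1) f')' = r^(n-1) (f - g)` on `(0, R)`, so `r^(n-1) f'(r) = ∫₀ʳ t^(n-1) (f - g)`.
The Neumann condition `f'(R) = 0` gives `∫₀ᴿ t^(n-1) f = ∫₀ᴿ t^(n-1) g = m / ω_n`, and since
`f, g ≥ 0` we get `r^(n-1) |f'(r)| ≤ ∫₀ᴿ t^(n-1) (f + g) = 2m / ω_n`. Finally `|∇w(x)| = |f'(|x|)|`.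
-/

open scoped Topology RealInnerProductSpace

section NormComposition

variable {E : Type*} [NormedAddCommGroup E] [InnerProductSpace ℝ E] [CompleteSpace E]

theorem hasGradientAt_norm {x : E} (hx : x ≠ 0) : HasGradientAt (‖·‖) (‖x‖⁻¹ • x) x := by
  have h := (hasStrictFDerivAt_norm_sq x).hasFDerivAt.sqrt (by positivity)
  simp only [Real.sqrt_sq (norm_nonneg _)] at h
  refine hasGradientAt_iff_hasFDerivAt.2 (h.congr_fderiv ?_)
  ext v
  simp only [one_div, mul_inv_rev, smul_apply, coe_innerSL_apply, nsmul_eq_mul, Nat.cast_ofNat,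
    smul_eq_mul, map_smul, InnerProductSpace.toDual_apply_apply]
  field_simp

theorem HasDerivAt.hasGradientAt_comp_norm {ψ : ℝ → ℝ} {ψ' : ℝ} {x : E}
    (hψ : HasDerivAt ψ ψ' ‖x‖) (hx : x ≠ 0) :
    HasGradientAt (fun z => ψ ‖z‖) ((ψ' / ‖x‖) • x) x := by
  have h := hψ.comp_hasFDerivAt x (hasGradientAt_norm hx).hasFDerivAt
  refine hasGradientAt_iff_hasFDerivAt.2 (h.congr_fderiv ?_)
  ext v
  simp only [map_smul, smul_apply, InnerProductSpace.toDual_apply_apply, smul_eq_mul]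
  ring

end NormComposition

section Laplacian

variable {n : ℕ}

theorem pd_eq_inner_gradient (f : En n → ℝ) (i : Fin n) (x : En n) :
    pd f i x = ⟪gradient f x, EuclideanSpace.single i 1⟫ :=
  (inner_gradient_left ..).symm

theorem pd_congr {f₁ f₂ : En n → ℝ} {x : En n} (h : f₁ =ᶠ[𝓝 x] f₂) (i : Fin n) :
    pd f₁ i x = pd f₂ i x := by
  rw [pd, pd, h.fderiv_eq]

theorem lap_congr {f₁ f₂ : En n → ℝ} {x : En n} (h : f₁ =ᶠ[𝓝 x] f₂) : lap f₁ x = lap f₂ x :=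
  Finset.sum_congr rfl fun i _ =>
    pd_congr (h.eventuallyEq_nhds.mono fun _ hy => pd_congr hy i) i

theorem pd_comp_norm {ψ : ℝ → ℝ} {x : En n} (hψ : DifferentiableAt ℝ ψ ‖x‖) (hx : x ≠ 0)
    (i : Fin n) : pd (fun z => ψ ‖z‖) i x = deriv ψ ‖x‖ / ‖x‖ * x i := by
  rw [pd_eq_inner_gradient, (hψ.hasDerivAt.hasGradientAt_comp_norm hx).gradient,
    real_inner_smul_left, EuclideanSpace.inner_single_right]
  simp

theorem pd_mul_coord_comp_norm {φ : ℝ → ℝ} {x : En n} (hφ : DifferentiableAt ℝ φ ‖x‖)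
    (hx : x ≠ 0) (i : Fin n) :
    pd (fun z => φ ‖z‖ * z i) i x = deriv φ ‖x‖ * x i ^ 2 / ‖x‖ + φ ‖x‖ := by
  have h : HasFDerivAt (fun z : En n => φ ‖z‖ * z i) _ x :=
    (hφ.hasDerivAt.hasGradientAt_comp_norm hx).hasFDerivAt.mul
      (EuclideanSpace.proj (𝕜 := ℝ) i).hasFDerivAt
  rw [pd, h.fderiv]
  simp only [map_smul, add_apply, smul_apply, PiLp.proj_apply, PiLp.single_eq_same,
    smul_eq_mul, mul_one, InnerProductSpace.toDual_apply_apply,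
    EuclideanSpace.inner_single_right, Real.ringHom_apply, one_mul]
  ring

theorem lap_comp_norm {ψ : ℝ → ℝ} (hψ : ContDiff ℝ 2 ψ) {x : En n} (hx : x ≠ 0) :
    lap (fun z => ψ ‖z‖) x = deriv (deriv ψ) ‖x‖ + ((n : ℝ) - 1) * deriv ψ ‖x‖ / ‖x‖ := by
  set φ : ℝ → ℝ := fun t => deriv ψ t / t
  have hr : ‖x‖ ≠ 0 := norm_ne_zero_iff.2 hx
  have hφ : HasDerivAt φ
      ((deriv (deriv ψ) ‖x‖ * ‖x‖ - deriv ψ ‖x‖ * 1) / ‖x‖ ^ 2) ‖x‖ :=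
    (hψ.differentiable_deriv_two _).hasDerivAt.div (hasDerivAt_id _) hr
  have hpd (i : Fin n) : pd (pd (fun z => ψ ‖z‖) i) i x = pd (fun z => φ ‖z‖ * z i) i x :=
    pd_congr ((eventually_ne_nhds hx).mono fun z hz =>
      pd_comp_norm (hψ.differentiable two_ne_zero _) hz i) i
  simp only [lap, hpd, pd_mul_coord_comp_norm hφ.differentiableAt hx, Finset.sum_add_distrib,
    ← Finset.sum_div, ← Finset.mul_sum, ← EuclideanSpace.real_norm_sq_eq, Finset.sum_const,
    Finset.card_univ, Fintype.card_fin, nsmul_eq_mul, hφ.deriv, φ]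
  field_simp
  ring

end Laplacian

section RadialFunctions

variable {n : ℕ} {R : ℝ}

theorem radial.eq_norm_smul {f : En n → ℝ} (hf : radial R f) {e : En n} (he : ‖e‖ = 1)
    {x : En n} (hx : x ∈ closedBall (0 : En n) R) : f x = f (‖x‖ • e) := by
  have hxe : ‖‖x‖ • e‖ = ‖x‖ := by simp [norm_smul, he]
  exact hf x hx _ (by simpa [hxe] using hx) hxe.symm

theorem radial.eventuallyEq_comp_norm {f : En n → ℝ} (hf : radial R f) {e : En n}
    (he : ‖e‖ = 1) {x : En n} (hx : x ∈ ball (0 : En n) R) :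
    f =ᶠ[𝓝 x] fun z => f (‖z‖ • e) :=
  eventually_of_mem (isOpen_ball.mem_nhds hx) fun _ hz =>
    hf.eq_norm_smul he (ball_subset_closedBall hz)

theorem radial.lap_eq {w : En n → ℝ} (hw : ContDiff ℝ 2 w) (hrad : radial R w) {e : En n}
    (he : ‖e‖ = 1) {r : ℝ} (hr : r ∈ Ioo 0 R) :
    lap w (r • e) = deriv (deriv fun t => w (t • e)) r
      + ((n : ℝ) - 1) * deriv (fun t => w (t • e)) r / r := by
  have hre : ‖r • e‖ = r := by simp [norm_smul, he, abs_of_pos hr.1]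
  have hf : ContDiff ℝ 2 fun t : ℝ => w (t • e) := hw.comp (contDiff_id.smul contDiff_const)
  rw [lap_congr (hrad.eventuallyEq_comp_norm he (by simpa [hre] using hr.2)),
    lap_comp_norm hf (by rw [← norm_ne_zero_iff, hre]; exact hr.1.ne'), hre]

/-- At the boundary sphere the formula follows from the interior one by continuity of `∇w`. -/
theorem radial.gradient_eq {w : En n → ℝ} (hw : ContDiff ℝ 1 w) (hrad : radial R w) {e : En n}
    (he : ‖e‖ = 1) {x : En n} (hx : x ≠ 0) (hxR : ‖x‖ ≤ R) :
    gradient w x = (deriv (fun t => w (t • e)) ‖x‖ / ‖x‖) • x := by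
  set F : En n → En n := fun z => (deriv (fun t => w (t • e)) ‖z‖ / ‖z‖) • z
  have hf : ContDiff ℝ 1 fun t : ℝ => w (t • e) := hw.comp (contDiff_id.smul contDiff_const)
  set s : Set (En n) := {z | z ≠ 0 ∧ ‖z‖ < R}
  have hs : EqOn (gradient w) F s := fun z hz => by
    rw [(hrad.eventuallyEq_comp_norm he (mem_ball_zero_iff.2 hz.2)).gradient_eq,
      ((hf.differentiable one_ne_zero _).hasDerivAt.hasGradientAt_comp_norm hz.1).gradient]
  have hxs : x ∈ closure s := by
    refine mem_closure_of_tendsto (b := 𝓝[<] (1 : ℝ)) (f := fun t : ℝ => t • x) ?_ ?_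
    · exact ((show Continuous fun t : ℝ => t • x by fun_prop).tendsto' 1 x (one_smul ℝ x)).mono_left
        nhdsWithin_le_nhds
    · filter_upwards [Ioo_mem_nhdsLT zero_lt_one] with t ht
      refine ⟨smul_ne_zero ht.1.ne' hx, ?_⟩
      rw [norm_smul, Real.norm_of_nonneg ht.1.le]
      nlinarith [norm_pos_iff.2 hx, ht.2]
  have hgc : ContinuousAt (gradient w) x :=
    ((InnerProductSpace.toDual ℝ (En n)).symm.continuous.comp
      (hw.continuous_fderiv one_ne_zero)).continuousAt
  have hFc : ContinuousAt F x :=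
    ((((hf.continuous_deriv le_rfl).comp continuous_norm).continuousAt.div
      continuous_norm.continuousAt (norm_ne_zero_iff.2 hx)).smul continuousAt_id)
  have := mem_closure_iff_nhdsWithin_neBot.1 hxs
  exact tendsto_nhds_unique ((hgc.tendsto.mono_left nhdsWithin_le_nhds).congr'
    (eventually_nhdsWithin_of_forall hs)) (hFc.tendsto.mono_left nhdsWithin_le_nhds)

theorem radial.norm_gradient_eq {w : En n → ℝ} (hw : ContDiff ℝ 1 w) (hrad : radial R w)
    {e : En n} (he : ‖e‖ = 1) {x : En n} (hx : x ≠ 0) (hxR : ‖x‖ ≤ R) :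
    ‖gradient w x‖ = |deriv (fun t => w (t • e)) ‖x‖| := by
  rw [hrad.gradient_eq hw he hx hxR, norm_smul, Real.norm_eq_abs, abs_div, abs_norm,
    div_mul_cancel₀ _ (norm_ne_zero_iff.2 hx)]

theorem radial.deriv_eq_zero_of_inner_gradient_eq_zero {w : En n → ℝ} (hw : ContDiff ℝ 1 w)
    (hrad : radial R w) {e : En n} (he : ‖e‖ = 1) (hR : 0 < R)
    (hneu : ⟪gradient w (R • e), R • e⟫ = 0) : deriv (fun t => w (t • e)) R = 0 := by
  have hRe : ‖R • e‖ = R := by simp [norm_smul, he, abs_of_pos hR]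
  rw [hrad.gradient_eq hw he (norm_ne_zero_iff.1 (by rw [hRe]; exact hR.ne')) hRe.le,
    real_inner_smul_left, real_inner_self_eq_norm_sq, hRe] at hneu
  field_simp at hneu
  exact (mul_eq_zero.1 hneu).resolve_right hR.ne'

end RadialFunctions

section RadialODE

variable {k : ℕ} {R : ℝ} {f g : ℝ → ℝ}

theorem pow_mul_deriv_eq_integral (hk : k ≠ 0) (hf : ContDiff ℝ 2 f)
    (hg : ContinuousOn g (Icc 0 R))
    (hode : ∀ r ∈ Ioo 0 R, deriv (deriv f) r + k * deriv f r / r = f r - g r)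
    {r : ℝ} (hr : r ∈ Icc 0 R) :
    r ^ k * deriv f r = ∫ t in (0)..r, t ^ k * (f t - g t) := by
  have hderiv (t : ℝ) (ht : t ∈ Ioo 0 r) :
      HasDerivAt (fun s => s ^ k * deriv f s) (t ^ k * (f t - g t)) t := by
    refine ((hasDerivAt_pow k t).mul (hf.differentiable_deriv_two t).hasDerivAt).congr_deriv ?_
    rw [← hode t ⟨ht.1, ht.2.trans_le hr.2⟩, ← pow_sub_one_mul hk]
    field_simp [ht.1.ne']
    ring
  have hcont : ContinuousOn (fun t => t ^ k * (f t - g t)) (Icc 0 r) :=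
    ((continuous_pow k).continuousOn.mul (hf.continuous.continuousOn.sub hg)).mono
      (Icc_subset_Icc_right hr.2)
  rw [intervalIntegral.integral_eq_sub_of_hasDerivAt_of_le (f := fun s => s ^ k * deriv f s) hr.1
    ((continuous_pow k).mul (hf.continuous_deriv one_le_two)).continuousOn hderiv
    (hcont.intervalIntegrable_of_Icc hr.1), zero_pow hk, zero_mul, sub_zero]

theorem pow_mul_abs_deriv_le (hk : k ≠ 0) (hf : ContDiff ℝ 2 f) (hg : ContinuousOn g (Icc 0 R))
    (hode : ∀ r ∈ Ioo 0 R, deriv (deriv f) r + k * deriv f r / r = f r - g r)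
    (hfR : deriv f R = 0) (hf₀ : ∀ t ∈ Icc 0 R, 0 ≤ f t) (hg₀ : ∀ t ∈ Icc 0 R, 0 ≤ g t)
    {r : ℝ} (hr : r ∈ Icc 0 R) :
    r ^ k * |deriv f r| ≤ 2 * ∫ t in (0)..R, t ^ k * g t := by
  have hR : 0 ≤ R := hr.1.trans hr.2
  have hfc := hf.continuous.continuousOn (s := Icc 0 R)
  have hint {h : ℝ → ℝ} (hh : ContinuousOn h (Icc 0 R)) :
      IntervalIntegrable (fun t => t ^ k * h t) volume 0 R :=
    ((continuous_pow k).continuousOn.mul hh).intervalIntegrable_of_Icc hR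
  have hint_sub : IntervalIntegrable (fun t => t ^ k * (f t - g t)) volume 0 R := hint (hfc.sub hg)
  have htotal : ∫ t in (0)..R, t ^ k * (f t - g t) = 0 := by
    rw [← pow_mul_deriv_eq_integral hk hf hg hode ⟨hR, le_rfl⟩, hfR, mul_zero]
  calc r ^ k * |deriv f r| = |∫ t in (0)..r, t ^ k * (f t - g t)| := by
        rw [← pow_mul_deriv_eq_integral hk hf hg hode hr, abs_mul,
          abs_of_nonneg (pow_nonneg hr.1 k)]
    _ ≤ ∫ t in (0)..r, |t ^ k * (f t - g t)| := intervalIntegral.abs_integral_le_integral_abs hr.1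
    _ ≤ ∫ t in (0)..R, |t ^ k * (f t - g t)| :=
        intervalIntegral.integral_mono_interval le_rfl hr.1 hr.2
          (Eventually.of_forall fun _ => abs_nonneg _) hint_sub.abs
    _ ≤ ∫ t in (0)..R, t ^ k * (f t + g t) := by
        refine intervalIntegral.integral_mono_on hR hint_sub.abs (hint (hfc.add hg))
          fun t ht => ?_
        rw [abs_mul, abs_of_nonneg (pow_nonneg ht.1 k)]
        exact mul_le_mul_of_nonneg_left
          (abs_sub_le_iff.2 ⟨by linarith [hg₀ t ht], by linarith [hf₀ t ht]⟩) (pow_nonneg ht.1 k)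
    _ = ∫ t in (0)..R, (t ^ k * (f t - g t) + 2 * (t ^ k * g t)) := by
        congr 1 with t
        ring
    _ = 2 * ∫ t in (0)..R, t ^ k * g t := by
        rw [intervalIntegral.integral_add hint_sub ((hint hg).const_mul 2), htotal, zero_add,
          intervalIntegral.integral_const_mul]

end RadialODE

section PolarIntegral

variable {n : ℕ}

theorem sphereArea_pos (hn : n ≠ 0) : 0 < sphereArea n :=
  mul_pos (Nat.cast_pos.2 (Nat.pos_of_ne_zero hn))
    (ENNReal.toReal_pos (measure_ball_pos volume _ one_pos).ne' measure_ball_lt_top.ne)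

theorem setIntegral_ball_eq_sphereArea_mul (hn : n ≠ 0) {R : ℝ} (hR : 0 ≤ R) {u : En n → ℝ}
    {g : ℝ → ℝ} (hug : ∀ x ∈ ball (0 : En n) R, u x = g ‖x‖) :
    ∫ x in ball (0 : En n) R, u x = sphereArea n * ∫ t in (0)..R, t ^ (n - 1) * g t := by
  have : NeZero n := ⟨hn⟩
  calc ∫ x in ball (0 : En n) R, u x = ∫ x in ball (0 : En n) R, g ‖x‖ :=
        setIntegral_congr_fun measurableSet_ball hug
    _ = ∫ x : En n, (Iio R).indicator g ‖x‖ := by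
        rw [← integral_indicator measurableSet_ball]
        congr 1 with x
        rw [← indicator_comp_right]
        congr 1
        ext; simp
    _ = sphereArea n * ∫ t in Ioi 0, (Iio R).indicator (fun t => t ^ (n - 1) * g t) t := by
        simp only [integral_fun_norm_addHaar, finrank_euclideanSpace, Fintype.card_fin,
          Measure.real, smul_eq_mul, nsmul_eq_mul, sphereArea, indicator_mul_right]
        ring
    _ = sphereArea n * ∫ t in (0)..R, t ^ (n - 1) * g t := by
        rw [setIntegral_indicator measurableSet_Iio, Ioi_inter_Iio,
          intervalIntegral.integral_of_le hR, integral_Ioc_eq_integral_Ioo]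

end PolarIntegral

theorem gradient_estimate_w_general
    (n : ℕ) (hn : 4 ≤ n) (R : ℝ) (m : ℝ) (u w : En n → ℝ)
    (hu : ContinuousOn u (closedBall (0 : En n) R))
    (hw : ContDiff ℝ 2 w)
    (hnonneg : ∀ x ∈ closedBall (0 : En n) R, 0 ≤ u x ∧ 0 ≤ w x)
    (hurad : radial R u) (hwrad : radial R w)
    (heq : ∀ x ∈ ball (0 : En n) R, -lap w x + w x = u x)
    (hneu : ∀ x : En n, ‖x‖ = R → (inner ℝ (gradient w x) x : ℝ) = 0)
    (hmass : (∫ x in ball (0 : En n) R, u x) = m) :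
    ∀ x : En n, 0 < ‖x‖ → ‖x‖ ≤ R →
      ‖gradient w x‖ ≤ 2 * m / (sphereArea n * ‖x‖ ^ ((n : ℝ) - 1)) := by
  intro x hx hxR
  have hR : 0 < R := hx.trans_le hxR
  set e : En n := EuclideanSpace.single ⟨0, by omega⟩ 1
  have he : ‖e‖ = 1 := by simp [e]
  have hre {r : ℝ} (hr : 0 ≤ r) : ‖r • e‖ = r := by simp [norm_smul, he, abs_of_nonneg hr]
  have hmem {r : ℝ} (hr : r ∈ Icc 0 R) : r • e ∈ closedBall (0 : En n) R := by
    simpa [hre hr.1] using hr.2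
  have hw1 : ContDiff ℝ 1 w := hw.of_le one_le_two
  have hfR := hwrad.deriv_eq_zero_of_inner_gradient_eq_zero hw1 he hR (hneu _ (hre hR.le))
  have hode (r : ℝ) (hr : r ∈ Ioo 0 R) : deriv (deriv fun t => w (t • e)) r
      + ((n - 1 : ℕ) : ℝ) * deriv (fun t => w (t • e)) r / r = w (r • e) - u (r • e) := by
    have h := heq (r • e) (by simpa [hre hr.1.le] using hr.2)
    rw [hwrad.lap_eq hw he hr] at h
    rw [Nat.cast_pred (by omega)]
    linarith
  have hbound := pow_mul_abs_deriv_le (f := fun t => w (t • e)) (g := fun t => u (t • e))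
    (by omega) (hw.comp (contDiff_id.smul contDiff_const)) (hu.comp (by fun_prop) fun _ => hmem)
    hode hfR (fun t ht => (hnonneg _ (hmem ht)).2) (fun t ht => (hnonneg _ (hmem ht)).1)
    ⟨hx.le, hxR⟩
  have hmass' := setIntegral_ball_eq_sphereArea_mul (g := fun t => u (t • e)) (by omega) hR.le
    fun y hy => hurad.eq_norm_smul he (ball_subset_closedBall hy)
  have hA := sphereArea_pos (n := n) (by omega)
  rw [← Nat.cast_pred (by omega), Real.rpow_natCast, le_div_iff₀ (by positivity),
    hwrad.norm_gradient_eq hw1 he (norm_pos_iff.1 hx) hxR, ← hmass, hmass']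
  nlinarith [mul_le_mul_of_nonneg_left hbound hA.le]

/-- **Gradient estimate for the indirect signal.** Let `n ≥ 4`, `R > 0`,
`Ω = B_R ⊂ ℝⁿ` and `ω_n` be the surface area of the unit sphere in `ℝⁿ`.
If `u ∈ C⁰(Ω̄)`, `w ∈ C²(Ω̄)` are nonnegative and radially symmetric with
`-Δw + w = u` in `Ω`, `∂_ν w = 0` on `∂Ω` and `∫_Ω u = m`, then
`|∇w(x)| ≤ 2m/(ω_n |x|^{n-1})` for all `0 < |x| ≤ R`. -/
theorem gradient_estimate_w
    (n : ℕ) (hn : 4 ≤ n) (R : ℝ) (hR : 0 < R) (m : ℝ) (u w : En n → ℝ)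
    (hu : ContinuousOn u (closedBall (0 : En n) R))
    (hw : ContDiff ℝ 2 w)
    (hnonneg : ∀ x ∈ closedBall (0 : En n) R, 0 ≤ u x ∧ 0 ≤ w x)
    (hurad : radial R u) (hwrad : radial R w)
    (heq : ∀ x ∈ ball (0 : En n) R, -lap w x + w x = u x)
    (hneu : ∀ x : En n, ‖x‖ = R → (inner ℝ (gradient w x) x : ℝ) = 0)
    (hmass : (∫ x in ball (0 : En n) R, u x) = m) :
    ∀ x : En n, 0 < ‖x‖ → ‖x‖ ≤ R →
      ‖gradient w x‖ ≤ 2 * m / (sphereArea n * ‖x‖ ^ ((n : ℝ) - 1)) :=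
  gradient_estimate_w_general n hn R m u w hu hw hnonneg hurad hwrad heq hneu hmass
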